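/- In the ALCC setting with N workers, K = (k+t−1)D + 1, and A Byzantine workers each adding an arbitrary error matrix to their returned computation, if A ≤ ⌊(N−K)/2⌋ and all arithmetic is exact (infinite precision), then the master node can exactly recover f(l(z)) and hence all values f(X_j): for each entry position the received vector is a DFT codeword plus an error of Hamming weight at most ⌊(N−K)/2⌋, which is uniquely correctable. -/
import Mathlib


open Complex

/-- In ALCC with K = (k+t−1)D + 1 and at most ⌊(N−K)/2⌋ Byzantine workers,
with exact arithmetic the master node can exactly recover f(l(z)): for each
entry, if two polynomials of degree at most K−1 evaluated at the N-th roots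
of unity and corrupted by error vectors of Hamming weight at most
⌊(N−K)/2⌋ agree, then the polynomials (and the errors) coincide. -/
theorem stmt_6 (N K : ℕ) (hK : 1 ≤ K) (hKN : K ≤ N)
    (γ : ℂ) (hγ : γ = Complex.exp (-(2 * Real.pi * Complex.I) / N))
    (P P' : Polynomial ℂ)
    (hP : P.natDegree ≤ K - 1) (hP' : P'.natDegree ≤ K - 1)
    (e e' : Fin N → ℂ)
    (he : Nat.card {b : Fin N // e b ≠ 0} ≤ (N - K) / 2)
    (he' : Nat.card {b : Fin N // e' b ≠ 0} ≤ (N - K) / 2)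
    (hr : ∀ b : Fin N, P.eval (γ ^ (b : ℕ)) + e b = P'.eval (γ ^ (b : ℕ)) + e' b) :
    P = P' ∧ e = e' := by
  classical
  have hN : N ≠ 0 := by omega
  -- γ is a primitive N-th root of unity
  have hprim : IsPrimitiveRoot γ N := by
    have h1 := Complex.isPrimitiveRoot_exp N hN
    have : γ = (Complex.exp (2 * Real.pi * Complex.I / N))⁻¹ := by
      rw [hγ, ← Complex.exp_neg, neg_div]
    rw [this]
    exact h1.inv
  -- injectivity of b ↦ γ ^ b on Fin N
  have hinj : Function.Injective (fun b : Fin N => γ ^ (b : ℕ)) := by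
    intro a b hab
    exact Fin.ext (hprim.pow_inj a.isLt b.isLt hab)
  -- the good set
  set S : Finset (Fin N) := Finset.univ.filter (fun b => e b = 0 ∧ e' b = 0) with hS
  have hcard_e : (Finset.univ.filter (fun b : Fin N => e b ≠ 0)).card ≤ (N - K) / 2 := by
    have : Nat.card {b : Fin N // e b ≠ 0}
        = (Finset.univ.filter (fun b : Fin N => e b ≠ 0)).card := by
      rw [Nat.card_eq_fintype_card, Fintype.card_subtype]
    omega
  have hcard_e' : (Finset.univ.filter (fun b : Fin N => e' b ≠ 0)).card ≤ (N - K) / 2 := by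
    have : Nat.card {b : Fin N // e' b ≠ 0}
        = (Finset.univ.filter (fun b : Fin N => e' b ≠ 0)).card := by
      rw [Nat.card_eq_fintype_card, Fintype.card_subtype]
    omega
  have hScard : K ≤ S.card := by
    have hsub : Sᶜ ⊆ (Finset.univ.filter (fun b : Fin N => e b ≠ 0))
        ∪ (Finset.univ.filter (fun b : Fin N => e' b ≠ 0)) := by
      intro b hb
      simp only [hS, Finset.mem_compl, Finset.mem_filter, Finset.mem_univ, true_and,
        Finset.mem_union, not_and_or] at hb ⊢
      tauto
    have h1 : Sᶜ.card ≤ N - K := by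
      calc Sᶜ.card ≤ _ := Finset.card_le_card hsub
        _ ≤ (Finset.univ.filter (fun b : Fin N => e b ≠ 0)).card
            + (Finset.univ.filter (fun b : Fin N => e' b ≠ 0)).card :=
          Finset.card_union_le _ _
        _ ≤ N - K := by omega
    have h2 : S.card + Sᶜ.card = N := by
      rw [Finset.card_add_card_compl]; simp
    omega
  -- P - P' vanishes on S
  have hQ : P - P' = 0 := by
    apply Polynomial.eq_zero_of_natDegree_lt_card_of_eval_eq_zero (P - P')
      (f := fun b : S => γ ^ ((b : Fin N) : ℕ))
      (fun a b hab => Subtype.ext (hinj hab))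
    · rintro ⟨b, hb⟩
      simp only [hS, Finset.mem_filter] at hb
      have := hr b
      rw [hb.2.1, hb.2.2] at this
      simpa [Polynomial.eval_sub, sub_eq_zero] using this
    · calc (P - P').natDegree ≤ max P.natDegree P'.natDegree :=
            Polynomial.natDegree_sub_le _ _
        _ ≤ K - 1 := by omega
        _ < S.card := by omega
        _ = Fintype.card S := (Fintype.card_coe S).symm
  have hPP' : P = P' := sub_eq_zero.mp hQ
  refine ⟨hPP', funext fun b => ?_⟩
  have := hr b
  rw [hPP'] at this
  exact add_left_cancel this
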